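/- If G is a finite group of order 2^4 * 3 * 5^2 * 7 * 11^3 * 19 that contains no element of order 7*11, no element of order 7*19, and no element of order 11*19, then G is not solvable. -/

import Mathlib

/-!
Lucido's argument. A nontrivial finite solvable group `H` has a nontrivial normal `t`-subgroup
`T` (a Sylow subgroup of the last nontrivial term of the derived series). Since an element of
order `n` of `H ⧸ T` lifts to an element of order `n` of `H`, we may induct on `|H|` unless one
of the primes `p, q, r` divides `|T|` but not `|H ⧸ T|`.

If that prime is `p`, which divides `|H|` exactly once, then `|T| = p`, so `Aut T` has order
`p - 1` and an element of order `q ∤ p - 1` centralizes `T`; multiplying it with a generator of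
`T` gives order `pq`. The same works for `r`. If it is `q`, pick `v ∈ T` of order `q` and let
`C` be the centralizer of `T`: an element of order `p` or `r` in `C` commutes with `v`, and
otherwise `p` and `r` divide `|H ⧸ C|`, where the two-prime version of the argument produces an
element of order `pr`.
-/

open Subgroup

universe u

section

variable {G : Type*} [Group G]

theorem exists_orderOf_eq_of_surjective {H : Type*} [Group H] [Finite G] {f : G →* H}
    (hf : Function.Surjective f) (y : H) : ∃ x : G, orderOf x = orderOf y := by
  obtain ⟨x, rfl⟩ := hf y
  exact ⟨x ^ (orderOf x / orderOf (f x)),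
    orderOf_pow_orderOf_div (orderOf_pos x).ne' (orderOf_map_dvd f x)⟩

theorem Nat.Prime.dvd_card_quotient_or_dvd_card {s : ℕ} (hs : s.Prime) (hsG : s ∣ Nat.card G)
    (T : Subgroup G) : s ∣ Nat.card (G ⧸ T) ∨ s ∣ Nat.card T :=
  hs.dvd_mul.mp (card_eq_card_quotient_mul_card_subgroup T ▸ hsG)

theorem card_quotient_lt_of_ne_bot [Finite G] {T : Subgroup G} (hT : T ≠ ⊥) :
    Nat.card (G ⧸ T) < Nat.card G := by
  rw [card_eq_card_quotient_mul_card_subgroup T]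
  exact lt_mul_of_one_lt_right Nat.card_pos ((one_lt_card_iff_ne_bot T).mpr hT)

theorem Group.IsSolvable.exists_normal_isMulCommutative_ne_bot [IsSolvable G] [Nontrivial G] :
    ∃ A : Subgroup G, A.Normal ∧ IsMulCommutative A ∧ A ≠ ⊥ := by
  classical
  have hex : ∃ n, derivedSeries G n = ⊥ := IsSolvable.solvable
  obtain ⟨n, hn⟩ : ∃ n, Nat.find hex = n + 1 :=
    Nat.exists_eq_add_one.mpr <| Nat.pos_of_ne_zero fun h0 ↦
      top_ne_bot (derivedSeries_zero G ▸ h0 ▸ Nat.find_spec hex)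
  refine ⟨derivedSeries G n, derivedSeries_normal G n, ?_, Nat.find_min hex (by omega)⟩
  rw [← commutator_self_eq_bot_iff, ← derivedSeries_succ, ← hn]
  exact Nat.find_spec hex

theorem Group.IsSolvable.exists_normal_isPGroup_ne_bot [Finite G] [IsSolvable G]
    [Nontrivial G] : ∃ t : ℕ, t.Prime ∧ ∃ T : Subgroup G, T.Normal ∧ T ≠ ⊥ ∧ IsPGroup t T := by
  obtain ⟨A, hAn, hAc, hA⟩ := exists_normal_isMulCommutative_ne_bot (G := G)
  have hA1 : Nat.card A ≠ 1 := ((one_lt_card_iff_ne_bot A).mpr hA).ne'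
  set t := (Nat.card A).minFac
  have : Fact t.Prime := ⟨Nat.minFac_prime hA1⟩
  let P : Sylow t A := default
  have : (P : Subgroup A).Characteristic := P.characteristic_of_normal inferInstance
  refine ⟨t, Fact.out, (P : Subgroup A).map A.subtype, inferInstance, ?_, P.2.map A.subtype⟩
  rw [Ne, map_eq_bot_iff_of_injective _ A.subtype_injective]
  exact P.ne_bot_of_dvd_card (Nat.minFac_dvd _)

theorem IsPGroup.card_eq_of_not_dvd_card_quotient [Finite G] {T : Subgroup G} {t s : ℕ}
    [Fact t.Prime] (hT : IsPGroup t T) (hs : s.Prime) (hsG : s ∣ Nat.card G)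
    (hs2 : ¬ s ^ 2 ∣ Nat.card G) (hsQ : ¬ s ∣ Nat.card (G ⧸ T)) : Nat.card T = s := by
  have hsT := (hs.dvd_card_quotient_or_dvd_card hsG T).resolve_left hsQ
  have hsT2 : ¬ s ^ 2 ∣ Nat.card T := fun h ↦ hs2 (h.trans (card_subgroup_dvd_card T))
  obtain ⟨k, hk⟩ := IsPGroup.iff_card.mp hT
  rw [hk] at hsT hsT2 ⊢
  obtain rfl : s = t := (Nat.prime_dvd_prime_iff_eq hs Fact.out).mp (hs.dvd_of_dvd_pow hsT)
  have hk0 : k ≠ 0 := by rintro rfl; exact hs.not_dvd_one hsT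
  have hk2 : k < 2 := by
    by_contra! h
    exact hsT2 (pow_dvd_pow s h)
  obtain rfl : k = 1 := by omega
  exact pow_one s

theorem mem_centralizer_of_coprime_card_mulAut {T : Subgroup G} [T.Normal] {x : G}
    (hx : (orderOf x).Coprime (Nat.card (MulAut T))) : x ∈ centralizer (T : Set G) := by
  have h1 : MulAut.conjNormal x = 1 := orderOf_eq_one_iff.mp <|
    Nat.eq_one_of_dvd_coprimes hx (orderOf_map_dvd _ x) (orderOf_dvd_natCard _)
  intro w hw
  have h2 := congrArg Subtype.val (DFunLike.congr_fun h1 ⟨w, hw⟩)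
  rw [MulAut.conjNormal_apply] at h2
  exact (mul_inv_eq_iff_eq_mul.mp h2).symm

theorem exists_orderOf_eq_mul_of_card_eq_prime [Finite G] {T : Subgroup G} [T.Normal]
    {p q : ℕ} (hp : p.Prime) (hq : q.Prime) (hpq : p ≠ q) (hT : Nat.card T = p)
    (hqG : q ∣ Nat.card G) (hqp₁ : ¬ q ∣ p - 1) : ∃ g : G, orderOf g = p * q := by
  have := Fact.mk hp
  have := Fact.mk hq
  obtain ⟨w, hw⟩ := exists_prime_orderOf_dvd_card' (G := T) p (by rw [hT])
  obtain ⟨x, hx⟩ := exists_prime_orderOf_dvd_card' q hqG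
  have hcard : Nat.card (MulAut T) = p - 1 := by
    have := isCyclic_of_prime_card hT
    rw [IsCyclic.card_mulAut, hT, Nat.totient_prime hp]
  have hxC : x ∈ centralizer (T : Set G) :=
    mem_centralizer_of_coprime_card_mulAut (by rwa [hcard, hx, hq.coprime_iff_not_dvd])
  have hcop : (orderOf (w : G)).Coprime (orderOf x) := by
    rwa [orderOf_coe, hw, hx, Nat.coprime_primes hp hq]
  refine ⟨w * x, ?_⟩
  rw [Commute.orderOf_mul_eq_mul_orderOf_of_coprime (hxC w w.2) hcop, orderOf_coe, hw, hx]

end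

namespace Group.IsSolvable

variable {p q r : ℕ} {H : Type u} [Group H] [Finite H] [IsSolvable H]

theorem exists_orderOf_eq_mul (hp : p.Prime) (hr : r.Prime) (hpr : p ≠ r)
    (hrp₁ : ¬ r ∣ p - 1) (hpr₁ : ¬ p ∣ r - 1) (hpH : p ∣ Nat.card H) (hrH : r ∣ Nat.card H)
    (hp2 : ¬ p ^ 2 ∣ Nat.card H) (hr2 : ¬ r ^ 2 ∣ Nat.card H) :
    ∃ g : H, orderOf g = p * r := by
  induction hn : Nat.card H using Nat.strong_induction_on generalizing H with
  | _ n ih =>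
  have : Nontrivial H := Finite.one_lt_card_iff_nontrivial.mp <|
    (Nat.le_of_dvd Nat.card_pos hpH).trans_lt' hp.one_lt
  obtain ⟨t, ht, T, hTn, hT, hTt⟩ := exists_normal_isPGroup_ne_bot (G := H)
  have := Fact.mk ht
  have hQH : Nat.card (H ⧸ T) ∣ Nat.card H := card_quotient_dvd_card T
  by_cases hpQ : p ∣ Nat.card (H ⧸ T)
  swap
  · exact exists_orderOf_eq_mul_of_card_eq_prime hp hr hpr
      (hTt.card_eq_of_not_dvd_card_quotient hp hpH hp2 hpQ) hrH hrp₁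
  by_cases hrQ : r ∣ Nat.card (H ⧸ T)
  swap
  · rw [mul_comm]
    exact exists_orderOf_eq_mul_of_card_eq_prime hr hp hpr.symm
      (hTt.card_eq_of_not_dvd_card_quotient hr hrH hr2 hrQ) hpH hpr₁
  obtain ⟨y, hy⟩ := ih _ (hn ▸ card_quotient_lt_of_ne_bot hT) hpQ hrQ
    (fun h ↦ hp2 (h.trans hQH)) (fun h ↦ hr2 (h.trans hQH)) rfl
  obtain ⟨g, hg⟩ := exists_orderOf_eq_of_surjective (QuotientGroup.mk'_surjective T) y
  exact ⟨g, hg.trans hy⟩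

theorem exists_orderOf_eq_mul_of_mem_normal (hp : p.Prime) (hq : q.Prime) (hr : r.Prime)
    (hpq : p ≠ q) (hpr : p ≠ r) (hqr : q ≠ r) (hrp₁ : ¬ r ∣ p - 1) (hpr₁ : ¬ p ∣ r - 1)
    (hpH : p ∣ Nat.card H) (hrH : r ∣ Nat.card H)
    (hp2 : ¬ p ^ 2 ∣ Nat.card H) (hr2 : ¬ r ^ 2 ∣ Nat.card H)
    {T : Subgroup H} [T.Normal] {v : H} (hvT : v ∈ T) (hv : orderOf v = q) :
    ∃ g : H, orderOf g = p * q ∨ orderOf g = p * r ∨ orderOf g = q * r := by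
  set C := centralizer (T : Set H)
  have := Fact.mk hp
  have := Fact.mk hr
  by_cases hpC : p ∣ Nat.card C
  · obtain ⟨z, hz⟩ := exists_prime_orderOf_dvd_card' (G := C) p hpC
    have hcop : (orderOf (z : H)).Coprime (orderOf v) := by
      rwa [orderOf_coe, hz, hv, Nat.coprime_primes hp hq]
    refine ⟨z * v, Or.inl ?_⟩
    rw [Commute.orderOf_mul_eq_mul_orderOf_of_coprime (z.2 v hvT).symm hcop, orderOf_coe, hz,
      hv]
  by_cases hrC : r ∣ Nat.card C
  · obtain ⟨z, hz⟩ := exists_prime_orderOf_dvd_card' (G := C) r hrC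
    have hcop : (orderOf v).Coprime (orderOf (z : H)) := by
      rwa [orderOf_coe, hz, hv, Nat.coprime_primes hq hr]
    refine ⟨v * z, Or.inr (Or.inr ?_)⟩
    rw [Commute.orderOf_mul_eq_mul_orderOf_of_coprime (z.2 v hvT) hcop, orderOf_coe, hz, hv]
  have hQH : Nat.card (H ⧸ C) ∣ Nat.card H := card_quotient_dvd_card C
  obtain ⟨y, hy⟩ := exists_orderOf_eq_mul hp hr hpr hrp₁ hpr₁
    ((hp.dvd_card_quotient_or_dvd_card hpH C).resolve_right hpC)
    ((hr.dvd_card_quotient_or_dvd_card hrH C).resolve_right hrC)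
    (fun h ↦ hp2 (h.trans hQH)) (fun h ↦ hr2 (h.trans hQH))
  obtain ⟨g, hg⟩ := exists_orderOf_eq_of_surjective (QuotientGroup.mk'_surjective C) y
  exact ⟨g, Or.inr (Or.inl (hg.trans hy))⟩

theorem exists_orderOf_eq_mul_of_three_primes (hp : p.Prime) (hq : q.Prime) (hr : r.Prime)
    (hpq : p ≠ q) (hpr : p ≠ r) (hqr : q ≠ r) (hrp₁ : ¬ r ∣ p - 1) (hpr₁ : ¬ p ∣ r - 1)
    (hqp₁ : ¬ q ∣ p - 1) (hqr₁ : ¬ q ∣ r - 1)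
    (hpH : p ∣ Nat.card H) (hqH : q ∣ Nat.card H) (hrH : r ∣ Nat.card H)
    (hp2 : ¬ p ^ 2 ∣ Nat.card H) (hr2 : ¬ r ^ 2 ∣ Nat.card H) :
    ∃ g : H, orderOf g = p * q ∨ orderOf g = p * r ∨ orderOf g = q * r := by
  induction hn : Nat.card H using Nat.strong_induction_on generalizing H with
  | _ n ih =>
  have : Nontrivial H := Finite.one_lt_card_iff_nontrivial.mp <|
    (Nat.le_of_dvd Nat.card_pos hpH).trans_lt' hp.one_lt
  obtain ⟨t, ht, T, hTn, hT, hTt⟩ := exists_normal_isPGroup_ne_bot (G := H)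
  have := Fact.mk ht
  have hQH : Nat.card (H ⧸ T) ∣ Nat.card H := card_quotient_dvd_card T
  by_cases hpQ : p ∣ Nat.card (H ⧸ T)
  swap
  · obtain ⟨g, hg⟩ := exists_orderOf_eq_mul_of_card_eq_prime hp hq hpq
      (hTt.card_eq_of_not_dvd_card_quotient hp hpH hp2 hpQ) hqH hqp₁
    exact ⟨g, Or.inl hg⟩
  by_cases hrQ : r ∣ Nat.card (H ⧸ T)
  swap
  · obtain ⟨g, hg⟩ := exists_orderOf_eq_mul_of_card_eq_prime hr hq hqr.symm
      (hTt.card_eq_of_not_dvd_card_quotient hr hrH hr2 hrQ) hqH hqr₁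
    exact ⟨g, Or.inr (Or.inr (hg.trans (mul_comm r q)))⟩
  by_cases hqQ : q ∣ Nat.card (H ⧸ T)
  swap
  · have := Fact.mk hq
    obtain ⟨v, hv⟩ := exists_prime_orderOf_dvd_card' (G := T) q
      ((hq.dvd_card_quotient_or_dvd_card hqH T).resolve_left hqQ)
    exact exists_orderOf_eq_mul_of_mem_normal hp hq hr hpq hpr hqr hrp₁ hpr₁ hpH hrH hp2 hr2
      v.2 (by rwa [orderOf_coe])
  obtain ⟨y, hy⟩ := ih _ (hn ▸ card_quotient_lt_of_ne_bot hT) hpQ hqQ hrQ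
    (fun h ↦ hp2 (h.trans hQH)) (fun h ↦ hr2 (h.trans hQH)) rfl
  obtain ⟨g, hg⟩ := exists_orderOf_eq_of_surjective (QuotientGroup.mk'_surjective T) y
  exact ⟨g, hg ▸ hy⟩

end Group.IsSolvable

/-- If `G` is a finite group of order `2^4 * 3 * 5^2 * 7 * 11^3 * 19` containing no
element of order `7*11 = 77`, no element of order `7*19 = 133`, and no element of order
`11*19 = 209`, then `G` is not solvable. -/
theorem stmt_11 {G : Type*} [Group G] [Fintype G]
    (hcard : Fintype.card G = 2 ^ 4 * 3 * 5 ^ 2 * 7 * 11 ^ 3 * 19)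
    (h77 : ¬∃ g : G, orderOf g = 7 * 11)
    (h133 : ¬∃ g : G, orderOf g = 7 * 19)
    (h209 : ¬∃ g : G, orderOf g = 11 * 19) :
    ¬ IsSolvable G := by
  intro (_ : Group.IsSolvable G)
  have hG : Nat.card G = 2 ^ 4 * 3 * 5 ^ 2 * 7 * 11 ^ 3 * 19 := by
    rw [Nat.card_eq_fintype_card, hcard]
  obtain ⟨g, hg | hg | hg⟩ :=
    Group.IsSolvable.exists_orderOf_eq_mul_of_three_primes (p := 7) (q := 11) (r := 19) (H := G)
      (by norm_num) (by norm_num) (by norm_num) (by norm_num) (by norm_num) (by norm_num)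
      (by norm_num) (by norm_num) (by norm_num) (by norm_num)
      (by rw [hG]; norm_num) (by rw [hG]; norm_num) (by rw [hG]; norm_num)
      (by rw [hG]; norm_num) (by rw [hG]; norm_num)
  · exact h77 ⟨g, hg⟩
  · exact h133 ⟨g, hg⟩
  · exact h209 ⟨g, hg⟩
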